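/- Let (E,L) be a simple complex of oriented matroids with tope set T and signed Varchenko matrix 𝔙, and fix a linear order on E. Let e ∈ E and let Y, Y' ∈ L be nonzero covectors with Y_e = Y'_e = 0. If Q ∈ T^{Y',e}, R ∈ T^{Y,e} and Y' < Y in the componentwise order, then M^e_{Q,R} = 0. (Hence, ordering T so that the blocks T^{Y,e} are consecutive and T^{Y,e} precedes T^{Y',e} whenever Y < Y', the matrix M^e is block lower triangular with the matrices M^{Y,e} on the main diagonal.) -/

import Mathlib

open scoped Classical
open MvPolynomial

noncomputable section

abbrev SV (E : Type*) := E → SignType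

variable {E : Type*}

/-- Composition of sign vectors. -/
def scomp (X Y : SV E) : SV E := fun e => if X e = 0 then Y e else X e

/-- Separator of two sign vectors. -/
def sep (X Y : SV E) : Set E := {e | X e = -(Y e) ∧ X e ≠ 0}

/-- Zero set of a sign vector. -/
def zset (X : SV E) : Set E := {e | X e = 0}

/-- Face symmetry axiom. -/
def FSax (L : Set (SV E)) : Prop := ∀ X ∈ L, ∀ Y ∈ L, scomp X (-Y) ∈ L

/-- Strong elimination axiom. -/
def SEax (L : Set (SV E)) : Prop :=
  ∀ X ∈ L, ∀ Y ∈ L, ∀ e ∈ sep X Y,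
    ∃ Z ∈ L, Z e = 0 ∧ ∀ f ∉ sep X Y, Z f = scomp X Y f

/-- Complex of oriented matroids. -/
def IsCOM (L : Set (SV E)) : Prop := FSax L ∧ SEax L

/-- Simplicity. -/
def SimpleCOM (L : Set (SV E)) : Prop :=
  (∀ e : E, ∀ s : SignType, ∃ X ∈ L, X e = s) ∧
  (∀ e f : E, e ≠ f → ∀ s : SignType, ∃ X ∈ L, X e * X f = s)

/-- Topes: covectors of full support. -/
def Topes (L : Set (SV E)) : Set (SV E) := {X | X ∈ L ∧ ∀ e, X e ≠ 0}

/-- Componentwise order on sign vectors (0 < +, 0 < -). -/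
def covLE (X Y : SV E) : Prop := ∀ e, X e = 0 ∨ X e = Y e

def covLT (X Y : SV E) : Prop := covLE X Y ∧ X ≠ Y

def starSet (L : Set (SV E)) (X : SV E) : Set (SV E) := {T | T ∈ Topes L ∧ covLE X T}

/-- Entry of the signed Varchenko matrix. -/
def varEntry (K : Type*) [Field K] [Fintype E] (P Q : SV E) : MvPolynomial (E × Bool) K :=
  ∏ e ∈ Set.toFinset (sep P Q), X (if P e = 1 then (e, true) else (e, false))

/-- The signed Varchenko matrix, indexed by topes. -/
def varMatrix (K : Type*) [Field K] [Fintype E] (L : Set (SV E)) :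
    Matrix ↥(Topes L) ↥(Topes L) (MvPolynomial (E × Bool) K) :=
  Matrix.of fun P Q => varEntry K P.1 Q.1

/-- a(Y) = ∏_{e ∈ z(Y)} x_{e^+} x_{e^-}. -/
def aY (K : Type*) [Field K] [Fintype E] (Y : SV E) : MvPolynomial (E × Bool) K :=
  ∏ e ∈ Set.toFinset (zset Y), (X (e, true) * X (e, false))

/-- Restriction of a sign vector to a subset. -/
def restr (A : Set E) (X : SV E) : SV ↥A := fun a => X a.1

/-- `m` is the Möbius function of the relation `r` on the (finite) carrier `S`. -/
def IsMobiusOn {α : Type*} [Fintype α] (S : Set α) (r : α → α → Prop) (m : α → α → ℤ) : Prop :=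
  (∀ x ∈ S, m x x = 1) ∧
  ∀ x ∈ S, ∀ y ∈ S, r x y → x ≠ y →
    m x y = -∑ z ∈ Set.toFinset {z | z ∈ S ∧ r x z ∧ r z y ∧ z ≠ y}, m x z

/-- The carrier of the poset `T_{R,e}`: topes with `e`-coordinate `-R e`, plus
an artificial least element `none`. -/
def TReSet (L : Set (SV E)) (R : SV E) (e : E) : Set (Option (SV E)) :=
  insert none (some '' {P | P ∈ Topes L ∧ P e = -(R e)})

/-- The order of the poset `T_{R,e}` (order induced from the tope poset `T_R`,
with `none` as least element). -/
def TReRel (R : SV E) : Option (SV E) → Option (SV E) → Prop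
  | none, _ => True
  | some _, none => False
  | some P, some Q => sep R P ⊆ sep R Q

/-- `T^{Y,e}`: topes `P` such that `Y` is the maximal covector with `Y ≤ P` and `Y e = 0`. -/
def TYe (L : Set (SV E)) (Y : SV E) (e : E) : Set (SV E) :=
  {P | P ∈ Topes L ∧ covLE Y P ∧ Y e = 0 ∧
    ∀ Y' ∈ L, covLE Y' P → Y' e = 0 → covLE Y' Y}

/-- `e` is the maximal element of `S(Q,R)` w.r.t. the linear order `ord`. -/
def maxOfSep (ord : LinearOrder E) (e : E) (Q R : SV E) : Prop :=
  e ∈ sep Q R ∧ ∀ f ∈ sep Q R, ord.le f e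

/-- The matrix `M^e`. -/
def Mmat (K : Type*) [Field K] [Fintype E] (L : Set (SV E)) (ord : LinearOrder E) (e : E)
    (m : SV E → Option (SV E) → Option (SV E) → ℤ) :
    Matrix ↥(Topes L) ↥(Topes L) (MvPolynomial (E × Bool) K) :=
  Matrix.of fun Q R =>
    if Q = R then 1
    else if maxOfSep ord e Q.1 R.1 then
      (-(m R.1 none (some Q.1)) : ℤ) • varEntry K Q.1 R.1
    else 0

/-- The covector set of the cyclic oriented matroid `C_n`. -/
def cyc (E : Type*) : Set (SV E) :=
  {X | X = 0 ∨ ((∃ e, X e = 1) ∧ (∃ f, X f = -1))}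

/-- The topal fiber `ρ_{(S⁺,S⁻)}(L')`. -/
def fiber {E' : Type*} (L' : Set (SV E')) (Sp Sm : Set E') : Set (SV ↥((Sp ∪ Sm)ᶜ)) :=
  restr ((Sp ∪ Sm)ᶜ) '' {Z | Z ∈ L' ∧ (∀ e ∈ Sp, Z e = 1) ∧ (∀ e ∈ Sm, Z e = -1)}

/-!
For `R ∈ T^{Y,e}` we have `Y ≤ R` and `Y e = 0`, so `P ↦ Y ∘ P` maps the poset `T_{R,e}` into
itself, lies below the identity for `≼_R` (as `S(R, Y ∘ P) = S(R, P) ∩ z(Y)`) and is monotone.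
For any such kernel operator of a finite poset with least element `0̂`, `μ(0̂, x)` vanishes at
every `x ≠ π x`, by induction on `x`: a fixed point below `x` lies below `π x`, so `[0̂, x]` is
`[0̂, π x]`, `x`, and non-fixed points strictly below `x`; as both intervals have Möbius sum `0`,
`μ(0̂, x) = 0`. The fixed points of `P ↦ Y ∘ P` are the topes above `Y`, and `Q` is
not above `Y`, since maximality of `Y'` for `Q` would then force `Y ≤ Y'`.
-/
namespace IsMobiusOn

variable {α : Type*} [Fintype α] {S : Set α} {r : α → α → Prop} {m : α → α → ℤ}

theorem sum_Icc_eq_zero (hm : IsMobiusOn S r m) {x₀ x : α} (hx₀ : x₀ ∈ S) (hx : x ∈ S)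
    (hrx : r x x) (hx₀x : r x₀ x) (hne : x₀ ≠ x) :
    ∑ z ∈ Finset.univ.filter (fun z => z ∈ S ∧ r x₀ z ∧ r z x), m x₀ z = 0 := by
  rw [← Finset.add_sum_erase _ _ (by simpa using ⟨hx, hx₀x, hrx⟩), hm.2 x₀ hx₀ x hx hx₀x hne,
    Set.toFinset_ofPred, neg_add_eq_zero]
  refine Finset.sum_congr ?_ fun _ _ => rfl
  ext z
  simp only [Finset.mem_filter, Finset.mem_univ, true_and, Finset.mem_erase]
  tauto

theorem apply_eq_zero_of_map_ne (hm : IsMobiusOn S r m) {x₀ : α} (hx₀ : x₀ ∈ S)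
    (hrefl : ∀ x ∈ S, r x x)
    (htrans : ∀ x ∈ S, ∀ y ∈ S, ∀ z ∈ S, r x y → r y z → r x z)
    (hantisymm : ∀ x ∈ S, ∀ y ∈ S, r x y → r y x → x = y)
    (hbot : ∀ x ∈ S, r x₀ x)
    {π : α → α} (hπS : ∀ x ∈ S, π x ∈ S) (hπle : ∀ x ∈ S, r (π x) x)
    (hπmono : ∀ x ∈ S, ∀ y ∈ S, r x y → r (π x) (π y))
    (hπx₀ : ∀ x ∈ S, x ≠ x₀ → π x ≠ x₀)
    {x : α} (hx : x ∈ S) (hπx : π x ≠ x) : m x₀ x = 0 := by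
  induction x using
    (measure fun x => (Finset.univ.filter fun w => w ∈ S ∧ r w x).card).wf.induction with
  | _ x ih =>
  set I : α → Finset α := fun y => Finset.univ.filter fun z => z ∈ S ∧ r x₀ z ∧ r z y with hI
  have hπx₀_fixed : π x₀ = x₀ := hantisymm _ (hπS _ hx₀) _ hx₀ (hπle _ hx₀) (hbot _ (hπS _ hx₀))
  have hxx₀ : x ≠ x₀ := by rintro rfl; exact hπx hπx₀_fixed
  have hπxS := hπS x hx
  have hsub : I (π x) ⊆ I x := by
    intro z hz
    simp only [hI, Finset.mem_filter, Finset.mem_univ, true_and] at hz ⊢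
    exact ⟨hz.1, hz.2.1, htrans _ hz.1 _ hπxS _ hx hz.2.2 (hπle x hx)⟩
  have hx_mem : x ∈ I x \ I (π x) := by
    simp only [hI, Finset.mem_sdiff, Finset.mem_filter, Finset.mem_univ, true_and, not_and]
    exact ⟨⟨hx, hbot x hx, hrefl x hx⟩,
      fun _ _ hxπx => hπx (hantisymm _ hπxS _ hx (hπle x hx) hxπx)⟩
  have hvanish : ∀ z ∈ I x \ I (π x), z ≠ x → m x₀ z = 0 := by
    intro z hz hzx
    simp only [hI, Finset.mem_sdiff, Finset.mem_filter, Finset.mem_univ, true_and,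
      not_and] at hz
    obtain ⟨⟨hzS, hx₀z, hzx_le⟩, hz_not⟩ := hz
    have hπz : π z ≠ z := fun h => hz_not hzS hx₀z (h ▸ hπmono z hzS x hx hzx_le)
    refine ih z (Finset.card_lt_card ⟨fun w hw => ?_, fun hsup => hzx ?_⟩) hzS hπz
    · simp only [Finset.mem_filter, Finset.mem_univ, true_and] at hw ⊢
      exact ⟨hw.1, htrans _ hw.1 _ hzS _ hx hw.2 hzx_le⟩
    · have hxz := (Finset.mem_filter.mp (hsup (by simpa using ⟨hx, hrefl x hx⟩))).2.2
      exact hantisymm _ hzS _ hx hzx_le hxz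
  calc m x₀ x = ∑ z ∈ I x \ I (π x), m x₀ z :=
        (Finset.sum_eq_single_of_mem x hx_mem hvanish).symm
    _ = ∑ z ∈ I x, m x₀ z - ∑ z ∈ I (π x), m x₀ z := Finset.sum_sdiff_eq_sub hsub
    _ = 0 := by
      rw [hm.sum_Icc_eq_zero hx₀ hx (hrefl x hx) (hbot x hx) hxx₀.symm,
        hm.sum_Icc_eq_zero hx₀ hπxS (hrefl _ hπxS) (hbot _ hπxS) (hπx₀ x hx hxx₀).symm, sub_zero]

end IsMobiusOn

section SignVectors

variable {L : Set (SV E)} {X Y P R : SV E}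

theorem covLE_antisymm (hXY : covLE X Y) (hYX : covLE Y X) : X = Y :=
  funext fun f => by
    have := hXY f; have := hYX f
    generalize X f = a, Y f = b at *
    revert a b
    decide

theorem scomp_eq_self_iff : scomp Y P = P ↔ covLE Y P := by
  simp only [funext_iff, covLE, scomp]
  refine forall_congr' fun f => ?_
  generalize Y f = a, P f = b
  revert a b
  decide

theorem scomp_neg_scomp_neg (Y P : SV E) : scomp Y (-(scomp Y (-P))) = scomp Y P := by
  funext f
  simp only [scomp, Pi.neg_apply]
  split_ifs <;> simp

theorem FSax.scomp_mem (hFS : FSax L) (hY : Y ∈ L) (hP : P ∈ L) : scomp Y P ∈ L :=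
  scomp_neg_scomp_neg Y P ▸ hFS Y hY _ (hFS Y hY P hP)

theorem FSax.scomp_mem_topes (hFS : FSax L) (hY : Y ∈ L) (hP : P ∈ Topes L) :
    scomp Y P ∈ Topes L := by
  refine ⟨hFS.scomp_mem hY hP.1, fun f => ?_⟩
  simp only [scomp]
  split_ifs with h
  exacts [hP.2 f, h]

theorem sep_scomp (hYR : covLE Y R) (P : SV E) : sep R (scomp Y P) = sep R P ∩ zset Y := by
  ext f
  simp only [sep, scomp, zset, Set.mem_ofPred_eq, Set.mem_inter_iff]
  have := hYR f
  generalize Y f = a, P f = b, R f = c at this ⊢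
  revert a b c
  decide

theorem eq_of_sep_eq {P' : SV E} (hR : ∀ f, R f ≠ 0) (hP : ∀ f, P f ≠ 0) (hP' : ∀ f, P' f ≠ 0)
    (h : sep R P = sep R P') : P = P' := by
  funext f
  have hf := Set.ext_iff.mp h f
  simp only [sep, Set.mem_ofPred_eq] at hf
  have := hR f; have := hP f; have := hP' f
  generalize R f = a, P f = b, P' f = c at *
  revert a b c
  decide

end SignVectors

section TRe

variable {L : Set (SV E)} {R Y : SV E} {e : E}

theorem none_mem_TReSet : none ∈ TReSet L R e := Set.mem_insert _ _

theorem some_mem_TReSet {P : SV E} : some P ∈ TReSet L R e ↔ P ∈ Topes L ∧ P e = -(R e) := by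
  simp [TReSet]

theorem TReRel_refl (R : SV E) : ∀ x, TReRel R x x
  | none => trivial
  | some _ => subset_rfl

theorem TReRel_trans (R : SV E) : ∀ x y z, TReRel R x y → TReRel R y z → TReRel R x z
  | none, _, _, _, _ => trivial
  | some _, some _, some _, hxy, hyz => hxy.trans hyz

theorem TReRel_antisymm (hR : R ∈ Topes L) :
    ∀ x ∈ TReSet L R e, ∀ y ∈ TReSet L R e, TReRel R x y → TReRel R y x → x = y
  | none, _, none, _, _, _ => rfl
  | some _, hx, some _, hy, hxy, hyx =>
    congrArg some (eq_of_sep_eq hR.2 (some_mem_TReSet.mp hx).1.2 (some_mem_TReSet.mp hy).1.2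
      (hxy.antisymm hyx))

theorem IsMobiusOn.TRe_eq_zero_of_not_covLE [Fintype E] [DecidableEq E]
    {m : Option (SV E) → Option (SV E) → ℤ} (hm : IsMobiusOn (TReSet L R e) (TReRel R) m)
    (hFS : FSax L) (hY : Y ∈ L) (hR : R ∈ Topes L) (hYR : covLE Y R) (hYe : Y e = 0)
    {P : SV E} (hP : some P ∈ TReSet L R e) (hYP : ¬ covLE Y P) :
    m none (some P) = 0 := by
  refine hm.apply_eq_zero_of_map_ne none_mem_TReSet (fun x _ => TReRel_refl R x)
    (fun x _ y _ z _ => TReRel_trans R x y z) (TReRel_antisymm hR) (fun _ _ => trivial)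
    (π := Option.map (scomp Y)) ?_ ?_ ?_ ?_ hP ?_
  · rintro (_ | P) hP
    · exact none_mem_TReSet
    · obtain ⟨hPT, hPe⟩ := some_mem_TReSet.mp hP
      refine some_mem_TReSet.mpr ⟨hFS.scomp_mem_topes hY hPT, ?_⟩
      simpa [scomp, hYe] using hPe
  · rintro (_ | P) -
    · trivial
    · exact (sep_scomp hYR P).trans_subset Set.inter_subset_left
  · rintro (_ | P) - (_ | Q) - hPQ
    · trivial
    · trivial
    · exact hPQ.elim
    · simp only [Option.map_some, TReRel, sep_scomp hYR]
      exact Set.inter_subset_inter_left _ hPQ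
  · rintro (_ | P) - h
    · exact (h rfl).elim
    · simp
  · simpa [scomp_eq_self_iff] using hYP

end TRe

theorem Mmat_block_triangular_general {E : Type*} [Fintype E] [DecidableEq E] (K : Type*) [Field K]
    (L : Set (SV E)) (hCOM : IsCOM L)
    (ord : LinearOrder E) (e : E)
    (Y Y' : SV E) (hY : Y ∈ L)
    (hYe : Y e = 0)
    (Q R : SV E) (hQ : Q ∈ TYe L Y' e) (hR : R ∈ TYe L Y e)
    (hlt : covLT Y' Y)
    (m : SV E → Option (SV E) → Option (SV E) → ℤ)
    (hm : ∀ R ∈ Topes L, IsMobiusOn (TReSet L R e) (TReRel R) (m R)) :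
    Mmat K L ord e m ⟨Q, hQ.1⟩ ⟨R, hR.1⟩ = 0 := by
  have hYQ : ¬ covLE Y Q := fun h => hlt.2 (covLE_antisymm hlt.1 (hQ.2.2.2 Y hY h hYe))
  have hQR : Q ≠ R := by rintro rfl; exact hYQ hR.2.1
  rw [Mmat, Matrix.of_apply, if_neg (hQR ∘ congrArg Subtype.val)]
  split_ifs with hmax
  · rw [(hm R hR.1).TRe_eq_zero_of_not_covLE hCOM.1 hY hR.1 hR.2.1 hYe
      (some_mem_TReSet.mpr ⟨hQ.1, hmax.1.1⟩) hYQ, neg_zero, zero_smul]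
  · rfl

/-- block triangularity of `M^e`: if `Q ∈ T^{Y',e}`, `R ∈ T^{Y,e}`
and `Y' < Y` componentwise, then the `(Q,R)` entry of `M^e` vanishes. -/
theorem Mmat_block_triangular {E : Type*} [Fintype E] [DecidableEq E] (K : Type*) [Field K]
    (L : Set (SV E)) (hCOM : IsCOM L) (hsimple : SimpleCOM L)
    (ord : LinearOrder E) (e : E)
    (Y Y' : SV E) (hY : Y ∈ L) (hY' : Y' ∈ L) (hY0 : Y ≠ 0) (hY'0 : Y' ≠ 0)
    (hYe : Y e = 0) (hY'e : Y' e = 0)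
    (Q R : SV E) (hQ : Q ∈ TYe L Y' e) (hR : R ∈ TYe L Y e)
    (hlt : covLT Y' Y)
    (m : SV E → Option (SV E) → Option (SV E) → ℤ)
    (hm : ∀ R ∈ Topes L, IsMobiusOn (TReSet L R e) (TReRel R) (m R)) :
    Mmat K L ord e m ⟨Q, hQ.1⟩ ⟨R, hR.1⟩ = 0 :=
  Mmat_block_triangular_general K L hCOM ord e Y Y' hY hYe Q R hQ hR hlt m hm

end
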